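/- arXiv:2210.11645 — 6 statements merged into one kernel-verified Lean document; each statement's English description precedes it below -/
import Mathlib

section
/- Let W be a finite real reflection group acting on a Euclidean space V with inner product (-,-), and let γ ∈ W be a Coxeter element (so γ fixes no nonzero vector of V). Let ϑ := (γ − 1)⁻¹ : V → V. Then for every root ρ of W (a unit-length or arbitrary nonzero vector with reflection t_ρ ∈ W), one has (ϑ(ρ), ρ) = −(1/2)(ρ, ρ). -/
open scoped RealInnerProductSpace

theorem real_inner_eq_neg_half_inner_self_of_norm_add_eq {V : Type*} [NormedAddCommGroup V]
    [InnerProductSpace ℝ V] {u v : V} (h : ‖u + v‖ = ‖u‖) :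
    ⟪u, v⟫ = -(1 / 2) * ⟪v, v⟫ := by
  have hsq : ⟪u + v, u + v⟫ = ⟪u, u⟫ := by
    rw [real_inner_self_eq_norm_sq, real_inner_self_eq_norm_sq, h]
  rw [real_inner_add_add_self] at hsq
  linarith

theorem milnor_theta_inner_self_general
    {V : Type*} [NormedAddCommGroup V] [InnerProductSpace ℝ V]
    (γ : V ≃ₗᵢ[ℝ] V)
    (ϑ : V →ₗ[ℝ] V) (hϑ : ∀ v : V, γ (ϑ v) - ϑ v = v)
    (ρ : V) :
    ⟪ϑ ρ, ρ⟫ = -(1 / 2) * ⟪ρ, ρ⟫ := by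
  have hγϑ : γ (ϑ ρ) = ϑ ρ + ρ := by
    rw [← sub_eq_iff_eq_add', hϑ ρ]
  apply real_inner_eq_neg_half_inner_self_of_norm_add_eq
  rw [← hγϑ, γ.norm_map]

/-- Let `W` be a finite real reflection group acting on a Euclidean space `V`,
and let `γ ∈ W` be a Coxeter element (so `γ` fixes no nonzero vector of `V`).  Let
`ϑ := (γ − 1)⁻¹`.  Then for every root `ρ` of `W` (a nonzero vector whose reflection
`t_ρ` lies in `W`), one has `(ϑ(ρ), ρ) = −(1/2)(ρ, ρ)`. -/
theorem milnor_theta_inner_self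
    {V : Type*} [NormedAddCommGroup V] [InnerProductSpace ℝ V]
    (W : Subgroup (V ≃ₗᵢ[ℝ] V)) (hWfin : Finite W)
    (γ : V ≃ₗᵢ[ℝ] V) (hγW : γ ∈ W)
    (hγfix : ∀ v : V, γ v = v → v = 0)
    (ϑ : V →ₗ[ℝ] V) (hϑ : ∀ v : V, γ (ϑ v) - ϑ v = v)
    (ρ : V) (hρ : ρ ≠ 0)
    (tρ : V ≃ₗᵢ[ℝ] V) (htρW : tρ ∈ W)
    (htρ : ∀ x : V, tρ x = x - (2 * ⟪ρ, x⟫ / ⟪ρ, ρ⟫) • ρ) :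
    ⟪ϑ ρ, ρ⟫ = -(1 / 2) * ⟪ρ, ρ⟫ :=
  milnor_theta_inner_self_general γ ϑ hϑ ρ
end

section
/- Let W be a finite real reflection group on V, γ ∈ W a Coxeter element, and ϑ := (γ − 1)⁻¹. Then for every root ρ of W, the vector ϑ(ρ) is fixed by t_ρ γ, where t_ρ is the reflection in ρ; that is, (t_ρ γ)(ϑ(ρ)) = ϑ(ρ). -/
/-!
Since `γ` is orthogonal and `γ (ϑ ρ) = ϑ ρ + ρ`, the vectors `ϑ ρ` and `ϑ ρ + ρ` have the same
length, which forces `2 ⟪ρ, ϑ ρ + ρ⟫ = ⟪ρ, ρ⟫`; so `t_ρ` subtracts exactly `ρ` from `ϑ ρ + ρ`.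
-/

open scoped RealInnerProductSpace

section

variable {V : Type*} [NormedAddCommGroup V] [InnerProductSpace ℝ V]

theorem LinearIsometry.two_mul_inner_add_eq_inner_self_of_map_eq_add (f : V →ₗᵢ[ℝ] V)
    {u v : V} (h : f u = u + v) : 2 * ⟪v, u + v⟫ = ⟪v, v⟫ := by
  have hnorm : ‖u + v‖ ^ 2 = ‖u‖ ^ 2 := by rw [← h, f.norm_map]
  rw [norm_add_sq_real, ← real_inner_self_eq_norm_sq v] at hnorm
  rw [inner_add_right, real_inner_comm]
  linarith

theorem apply_eq_sub_of_two_mul_inner_eq_inner_self {t : V → V} {ρ w : V}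
    (ht : ∀ x : V, t x = x - (2 * ⟪ρ, x⟫ / ⟪ρ, ρ⟫) • ρ) (hρ : ρ ≠ 0)
    (hw : 2 * ⟪ρ, w⟫ = ⟪ρ, ρ⟫) : t w = w - ρ := by
  rw [ht, hw, div_self (inner_self_ne_zero.mpr hρ), one_smul]

end

theorem milnor_theta_fixed_by_reflection_mul_coxeter_general
    {V : Type*} [NormedAddCommGroup V] [InnerProductSpace ℝ V]
    (γ : V ≃ₗᵢ[ℝ] V)
    (ϑ : V →ₗ[ℝ] V) (hϑ : ∀ v : V, γ (ϑ v) - ϑ v = v)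
    (ρ : V) (hρ : ρ ≠ 0)
    (tρ : V ≃ₗᵢ[ℝ] V)
    (htρ : ∀ x : V, tρ x = x - (2 * ⟪ρ, x⟫ / ⟪ρ, ρ⟫) • ρ) :
    (tρ * γ) (ϑ ρ) = ϑ ρ := by
  have hγϑ : γ (ϑ ρ) = ϑ ρ + ρ := eq_add_of_sub_eq' (hϑ ρ)
  have hinner : 2 * ⟪ρ, ϑ ρ + ρ⟫ = ⟪ρ, ρ⟫ :=
    γ.toLinearIsometry.two_mul_inner_add_eq_inner_self_of_map_eq_add hγϑ
  change tρ (γ (ϑ ρ)) = ϑ ρ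
  rw [hγϑ, apply_eq_sub_of_two_mul_inner_eq_inner_self htρ hρ hinner, add_sub_cancel_right]

/-- Let `W` be a finite real reflection group on `V`, `γ ∈ W` a Coxeter
element, and `ϑ := (γ − 1)⁻¹`.  Then for every root `ρ` of `W`, the vector `ϑ(ρ)` is fixed
by `t_ρ γ`, where `t_ρ` is the reflection in `ρ`; that is, `(t_ρ γ)(ϑ(ρ)) = ϑ(ρ)`. -/
theorem milnor_theta_fixed_by_reflection_mul_coxeter
    {V : Type*} [NormedAddCommGroup V] [InnerProductSpace ℝ V]
    (W : Subgroup (V ≃ₗᵢ[ℝ] V)) (hWfin : Finite W)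
    (γ : V ≃ₗᵢ[ℝ] V) (hγW : γ ∈ W)
    (hγfix : ∀ v : V, γ v = v → v = 0)
    (ϑ : V →ₗ[ℝ] V) (hϑ : ∀ v : V, γ (ϑ v) - ϑ v = v)
    (ρ : V) (hρ : ρ ≠ 0)
    (tρ : V ≃ₗᵢ[ℝ] V) (htρW : tρ ∈ W)
    (htρ : ∀ x : V, tρ x = x - (2 * ⟪ρ, x⟫ / ⟪ρ, ρ⟫) • ρ) :
    (tρ * γ) (ϑ ρ) = ϑ ρ :=
  milnor_theta_fixed_by_reflection_mul_coxeter_general γ ϑ hϑ ρ hρ tρ htρ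
end

section
/- Let W be a finite real reflection group on V = ℝⁿ. For every w ∈ W, the absolute reflection length ℓ_T(w) equals the codimension of the fixed space of w, i.e., ℓ_T(w) = n − dim Fix(w), where Fix(w) = ker(w − Id). -/
open scoped RealInnerProductSpace

/-- An orthogonal reflection of a real inner product space: an isometry given by the
formula `x ↦ x − 2((ρ,x)/(ρ,ρ))ρ` for some nonzero vector `ρ`. -/
def IsEuclideanReflection {V : Type*} [NormedAddCommGroup V] [InnerProductSpace ℝ V]
    (t : V ≃ₗᵢ[ℝ] V) : Prop :=
  ∃ ρ : V, ρ ≠ 0 ∧ ∀ x : V, t x = x - (2 * ⟪ρ, x⟫ / ⟪ρ, ρ⟫) • ρ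

/-- The absolute (reflection) length of an element `w` with respect to the set of all
reflections lying in the group `W`. -/
noncomputable def absoluteLength {V : Type*} [NormedAddCommGroup V] [InnerProductSpace ℝ V]
    (W : Subgroup (V ≃ₗᵢ[ℝ] V)) (w : V ≃ₗᵢ[ℝ] V) : ℕ :=
  sInf {k : ℕ | ∃ l : List (V ≃ₗᵢ[ℝ] V),
    (∀ t ∈ l, t ∈ W ∧ IsEuclideanReflection t) ∧ l.length = k ∧ l.prod = w}

/-!
The lower bound holds for any product of reflections: `Fix (s * w)` contains
`Fix s ⊓ Fix w`, and `Fix s` is a hyperplane, so each factor lowers the dimension of the fixed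
space by at most one.

For the upper bound (Carter's lemma) it suffices to find, for `w ≠ 1`, a root `α` of `W`
orthogonal to `Fix w`: writing `α = w y - y`, the reflection along `α` swaps `w y` and `y`, so
`s_α * w` fixes `Fix w` and `y`, and induction on the codimension applies. If no such root
existed, some `p ∈ Fix w` would lie on no reflecting hyperplane. But only the identity of a finite
reflection group fixes such a regular vector: the positive roots `⟪β, p⟫ > 0` have a simple
system `Δ`, the reflections along `Δ` generate `W`, and a word in them fixing `p` can always be
shortened by two letters (the deletion condition).
-/

namespace FiniteReflectionGroup

open Module

variable {V : Type*} [NormedAddCommGroup V] [InnerProductSpace ℝ V]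

noncomputable def reflectionAlong (v : V) : V ≃ₗᵢ[ℝ] V := (ℝ ∙ v)ᗮ.reflection

lemma reflectionAlong_apply (v x : V) :
    reflectionAlong v x = x - (2 * ⟪v, x⟫ / ⟪v, v⟫) • v := by
  rw [reflectionAlong, Submodule.reflection_orthogonal_apply, Submodule.reflection_singleton_apply,
    real_inner_self_eq_norm_sq]
  simp only [RCLike.ofReal_real_eq_id, id]
  module

lemma reflectionAlong_apply_of_norm_eq_one {v : V} (hv : ‖v‖ = 1) (x : V) :
    reflectionAlong v x = x - (2 * ⟪v, x⟫) • v := by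
  rw [reflectionAlong_apply, real_inner_self_eq_norm_sq, hv, one_pow, div_one]

lemma reflectionAlong_smul (v : V) {c : ℝ} (hc : c ≠ 0) :
    reflectionAlong (c • v) = reflectionAlong v := by
  simp only [reflectionAlong, Submodule.span_singleton_smul_eq (Ne.isUnit hc)]

@[simp]
lemma reflectionAlong_neg (v : V) : reflectionAlong (-v) = reflectionAlong v := by
  rw [← neg_one_smul ℝ v, reflectionAlong_smul v (by norm_num)]

@[simp]
lemma reflectionAlong_apply_self (v : V) : reflectionAlong v v = -v :=
  Submodule.reflection_orthogonalComplement_singleton_eq_neg v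

@[simp]
lemma reflectionAlong_mul_self (v : V) : reflectionAlong v * reflectionAlong v = 1 :=
  Submodule.reflection_mul_reflection _

@[simp]
lemma reflectionAlong_inv (v : V) : (reflectionAlong v)⁻¹ = reflectionAlong v :=
  Submodule.reflection_inv

lemma mul_reflectionAlong_mul_inv (g : V ≃ₗᵢ[ℝ] V) (v : V) :
    g * reflectionAlong v * g⁻¹ = reflectionAlong (g v) := by
  ext x
  simp [reflectionAlong_apply, LinearIsometryEquiv.inner_map_eq_flip]

lemma isEuclideanReflection_iff {t : V ≃ₗᵢ[ℝ] V} :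
    IsEuclideanReflection t ↔ ∃ v : V, ‖v‖ = 1 ∧ t = reflectionAlong v := by
  constructor
  · rintro ⟨ρ, hρ, ht⟩
    refine ⟨‖ρ‖⁻¹ • ρ, by simp [norm_smul, hρ], ?_⟩
    rw [reflectionAlong_smul ρ (by simpa using hρ)]
    ext x
    rw [ht, reflectionAlong_apply]
  · rintro ⟨v, hv, rfl⟩
    exact ⟨v, by rintro rfl; simp at hv, reflectionAlong_apply v⟩

lemma eq_or_eq_neg_of_reflectionAlong_eq {α β : V} (hα : ‖α‖ = 1) (hβ : ‖β‖ = 1)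
    (h : reflectionAlong α = reflectionAlong β) : β = α ∨ β = -α := by
  have hβα : β = ⟪α, β⟫ • α := by
    have := congrArg (· β) h
    simp only [reflectionAlong_apply_self, reflectionAlong_apply_of_norm_eq_one hα] at this
    linear_combination (norm := module) (1 / 2 : ℝ) • this
  have habs : |⟪α, β⟫| = 1 := by simpa [norm_smul, hα, hβ] using congrArg norm hβα.symm
  rcases abs_eq zero_le_one |>.1 habs with h1 | h1
  · exact .inl (by rw [hβα, h1, one_smul])
  · exact .inr (by rw [hβα, h1, neg_one_smul])

lemma finite_setOf_reflectionAlong_eq (t : V ≃ₗᵢ[ℝ] V) :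
    {α : V | ‖α‖ = 1 ∧ reflectionAlong α = t}.Finite := by
  by_cases h : ∃ α₀, ‖α₀‖ = 1 ∧ reflectionAlong α₀ = t
  · obtain ⟨α₀, h₀, rfl⟩ := h
    exact (Set.toFinite {α₀, -α₀}).subset fun α hα =>
      eq_or_eq_neg_of_reflectionAlong_eq h₀ hα.1 hα.2.symm
  · exact Set.finite_empty.subset fun α hα => h ⟨α, hα⟩

def fixedSpace (w : V ≃ₗᵢ[ℝ] V) : Submodule ℝ V :=
  LinearMap.ker ((w : V →ₗ[ℝ] V) - LinearMap.id)

@[simp]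
lemma mem_fixedSpace {w : V ≃ₗᵢ[ℝ] V} {x : V} : x ∈ fixedSpace w ↔ w x = x := by
  simp [fixedSpace, sub_eq_zero]

@[simp]
lemma fixedSpace_one : fixedSpace (1 : V ≃ₗᵢ[ℝ] V) = ⊤ := by
  ext; simp

lemma fixedSpace_reflectionAlong (v : V) : fixedSpace (reflectionAlong v) = (ℝ ∙ v)ᗮ :=
  Submodule.ext fun x => mem_fixedSpace.trans (Submodule.reflection_eq_self_iff x)

lemma inf_le_fixedSpace_mul (f g : V ≃ₗᵢ[ℝ] V) :
    fixedSpace f ⊓ fixedSpace g ≤ fixedSpace (f * g) := by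
  rintro x ⟨hf, hg⟩
  simp_all

section FiniteDimensional

variable [FiniteDimensional ℝ V]

lemma finrank_fixedSpace_reflectionAlong_add_one {v : V} (hv : v ≠ 0) :
    finrank ℝ (fixedSpace (reflectionAlong v)) + 1 = finrank ℝ V := by
  rw [fixedSpace_reflectionAlong, ← finrank_span_singleton (K := ℝ) hv, add_comm,
    Submodule.finrank_add_finrank_orthogonal]

lemma finrank_le_finrank_fixedSpace_prod_add_length (l : List (V ≃ₗᵢ[ℝ] V))
    (hl : ∀ t ∈ l, IsEuclideanReflection t) :
    finrank ℝ V ≤ finrank ℝ (fixedSpace l.prod) + l.length := by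
  induction l with
  | nil => rw [List.prod_nil, fixedSpace_one, finrank_top, List.length_nil, add_zero]
  | cons t l ih =>
    obtain ⟨v, hv, rfl⟩ := isEuclideanReflection_iff.1 (hl t List.mem_cons_self)
    have hv0 : v ≠ 0 := by rintro rfl; simp at hv
    have hl := ih fun s hs => hl s (List.mem_cons_of_mem _ hs)
    have hv := finrank_fixedSpace_reflectionAlong_add_one hv0
    have hsup := Submodule.finrank_sup_add_finrank_inf_eq
      (fixedSpace (reflectionAlong v)) (fixedSpace l.prod)
    have hinf := Submodule.finrank_mono (inf_le_fixedSpace_mul (reflectionAlong v) l.prod)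
    have := Submodule.finrank_le (fixedSpace (reflectionAlong v) ⊔ fixedSpace l.prod)
    rw [List.prod_cons, List.length_cons]
    omega

lemma orthogonal_fixedSpace (w : V ≃ₗᵢ[ℝ] V) :
    (fixedSpace w)ᗮ = LinearMap.range ((w : V →ₗ[ℝ] V) - LinearMap.id) := by
  refine (Submodule.eq_of_le_of_finrank_eq ?_ ?_).symm
  · rintro _ ⟨y, rfl⟩
    refine (Submodule.mem_orthogonal _ _).2 fun x hx => ?_
    rw [mem_fixedSpace] at hx
    simp only [LinearMap.sub_apply, LinearMap.id_apply, inner_sub_right]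
    rw [← w.inner_map_map x y, hx]
    exact sub_self _
  · have := LinearMap.finrank_range_add_finrank_ker ((w : V →ₗ[ℝ] V) - LinearMap.id)
    have := Submodule.finrank_add_finrank_orthogonal (fixedSpace w)
    rw [fixedSpace] at *
    omega

lemma fixedSpace_lt_fixedSpace_reflectionAlong_mul {w : V ≃ₗᵢ[ℝ] V} {v : V} (hv : v ≠ 0)
    (hvw : v ∈ (fixedSpace w)ᗮ) : fixedSpace w < fixedSpace (reflectionAlong v * w) := by
  have hle : fixedSpace w ≤ fixedSpace (reflectionAlong v) := by
    rw [fixedSpace_reflectionAlong]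
    exact fun x hx => Submodule.mem_orthogonal_singleton_iff_inner_right.2
      ((Submodule.mem_orthogonal' _ _).1 hvw x hx)
  have hmul : fixedSpace w ≤ fixedSpace (reflectionAlong v * w) :=
    (le_inf hle le_rfl).trans (inf_le_fixedSpace_mul _ _)
  rw [orthogonal_fixedSpace] at hvw
  obtain ⟨y, hy⟩ := hvw
  replace hy : w y - y = v := by simpa using hy
  subst hy
  refine lt_of_le_of_ne hmul fun h => hv ?_
  -- the reflection along `w y - y` swaps `w y` and `y`, which have the same norm
  have hy : y ∈ fixedSpace (reflectionAlong (w y - y) * w) :=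
    mem_fixedSpace.2 (Submodule.reflection_sub (w.norm_map y))
  rw [← h, mem_fixedSpace] at hy
  rw [hy, sub_self]

end FiniteDimensional

section Cone

lemma inner_nonneg_of_mem_hull {s : Set V} {p x : V} (hs : ∀ γ ∈ s, 0 ≤ ⟪γ, p⟫)
    (hx : x ∈ PointedCone.hull ℝ s) : 0 ≤ ⟪x, p⟫ := by
  induction hx using Submodule.span_induction with
  | mem γ hγ => exact hs γ hγ
  | zero => simp
  | add x y _ _ hx hy => rw [inner_add_left]; positivity
  | smul a x _ hx =>
    rw [← Nonneg.coe_smul, real_inner_smul_left]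
    exact mul_nonneg a.2 hx

lemma inner_pos_of_mem_hull {s : Set V} {p x : V} (hs : ∀ γ ∈ s, 0 < ⟪γ, p⟫)
    (hx : x ∈ PointedCone.hull ℝ s) (hx0 : x ≠ 0) : 0 < ⟪x, p⟫ := by
  refine Or.resolve_left ?_ hx0
  clear hx0
  induction hx using Submodule.span_induction with
  | mem γ hγ => exact .inr (hs γ hγ)
  | zero => exact .inl rfl
  | add x y _ _ hx hy =>
    rcases hx with rfl | hx
    · rwa [zero_add]
    rcases hy with rfl | hy
    · rw [add_zero]; exact .inr hx
    exact .inr (by rw [inner_add_left]; positivity)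
  | smul a x _ hx =>
    rcases hx with rfl | hx
    · simp
    rcases a.2.eq_or_lt with ha | ha
    · left; rw [← Nonneg.coe_smul, ← ha, zero_smul]
    · right; rw [← Nonneg.coe_smul, real_inner_smul_left]; positivity

end Cone

section RootSystem

structure IsRootSet (Φ : Set V) : Prop where
  finite : Φ.Finite
  norm_eq_one : ∀ α ∈ Φ, ‖α‖ = 1
  neg_mem : ∀ α ∈ Φ, -α ∈ Φ
  reflectionAlong_mem : ∀ α ∈ Φ, ∀ β ∈ Φ, reflectionAlong α β ∈ Φ

structure IsSimpleSystem (Φ : Set V) (p : V) (Δ : Finset V) : Prop where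
  subset : ↑Δ ⊆ Φ
  inner_pos : ∀ δ ∈ Δ, 0 < ⟪δ, p⟫
  mem_hull : ∀ β ∈ Φ, 0 < ⟪β, p⟫ → β ∈ PointedCone.hull ℝ (Δ : Set V)
  notMem_hull_diff : ∀ δ ∈ Δ, δ ∉ PointedCone.hull ℝ (↑Δ \ {δ})

lemma exists_isSimpleSystem {Φ : Set V} (hΦ : Φ.Finite) (p : V) :
    ∃ Δ, IsSimpleSystem Φ p Δ := by
  classical
  set P := hΦ.toFinset.filter (0 < ⟪·, p⟫)
  set C := P.powerset.filter fun Δ : Finset V => ∀ β ∈ P, β ∈ PointedCone.hull ℝ (Δ : Set V)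
  obtain ⟨Δ, hΔC, hmin⟩ := Finset.exists_min_image C Finset.card
    ⟨P, by simpa [C] using fun β hβ => PointedCone.subset_hull (Finset.mem_coe.2 hβ)⟩
  simp only [C, Finset.mem_filter, Finset.mem_powerset] at hΔC
  obtain ⟨hΔP, hΔ⟩ := hΔC
  have hP : ∀ δ ∈ Δ, δ ∈ Φ ∧ 0 < ⟪δ, p⟫ := fun δ hδ => by simpa [P] using hΔP hδ
  refine ⟨Δ, fun δ hδ => (hP δ hδ).1, fun δ hδ => (hP δ hδ).2,
    fun β hβ hβp => hΔ β (by simp [P, hβ, hβp]), fun δ hδ hmem => ?_⟩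
  have hle : PointedCone.hull ℝ (Δ : Set V) ≤ PointedCone.hull ℝ ↑(Δ.erase δ) := by
    rw [Finset.coe_erase]
    refine Submodule.span_le.2 fun γ hγ => ?_
    rcases eq_or_ne γ δ with rfl | h
    · exact hmem
    · exact PointedCone.subset_hull ⟨hγ, h⟩
  have := hmin (Δ.erase δ) (by
    simp only [C, Finset.mem_filter, Finset.mem_powerset]
    exact ⟨(Δ.erase_subset δ).trans hΔP, fun β hβ => hle (hΔ β hβ)⟩)
  have := Finset.card_erase_lt_of_mem hδ
  omega

variable {Φ : Set V} {p : V} {Δ : Finset V}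

lemma IsSimpleSystem.inner_reflectionAlong_pos (hΦ : IsRootSet Φ) (hp : ∀ α ∈ Φ, ⟪α, p⟫ ≠ 0)
    (hΔ : IsSimpleSystem Φ p Δ) {δ β : V} (hδ : δ ∈ Δ) (hβ : β ∈ Φ) (hβp : 0 < ⟪β, p⟫)
    (hβδ : β ≠ δ) : 0 < ⟪reflectionAlong δ β, p⟫ := by
  -- Otherwise write `β = b δ + z` and `-reflectionAlong δ β = e δ + z'` with `z, z'` in the cone
  -- of `Δ \ {δ}`. Then `z + z'` is a multiple `μ δ`: if `μ > 0` the cone contains `δ`,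
  -- contradicting minimality of `Δ`; if `μ ≤ 0`, pairing with `p` forces `z = 0`, i.e. `β = δ`.
  have hδΦ := hΔ.subset hδ
  have hsβ := hΦ.reflectionAlong_mem δ hδΦ β hβ
  by_contra! hneg
  have hη : 0 < ⟪-reflectionAlong δ β, p⟫ := by
    rw [inner_neg_left]; exact neg_pos.2 (hneg.lt_of_ne (hp _ hsβ))
  have hΔ_eq : (Δ : Set V) = insert δ (↑Δ \ {δ}) := by
    rw [Set.insert_sdiff_singleton, Set.insert_eq_of_mem (Finset.mem_coe.2 hδ)]
  obtain ⟨b, z, hz, hβ_eq⟩ := Submodule.mem_span_insert.1 (hΔ_eq ▸ hΔ.mem_hull β hβ hβp)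
  obtain ⟨e, z', hz', hη_eq⟩ :=
    Submodule.mem_span_insert.1 (hΔ_eq ▸ hΔ.mem_hull _ (hΦ.neg_mem _ hsβ) hη)
  rw [← Nonneg.coe_smul] at hβ_eq hη_eq
  rw [reflectionAlong_apply_of_norm_eq_one (hΦ.norm_eq_one δ hδΦ)] at hη_eq
  set μ : ℝ := 2 * ⟪δ, β⟫ - b - e
  have hsum : z + z' = μ • δ := by linear_combination (norm := module) -hβ_eq - hη_eq
  have hpos : ∀ γ ∈ (↑Δ \ {δ} : Set V), 0 < ⟪γ, p⟫ := fun γ hγ => hΔ.inner_pos γ hγ.1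
  rcases lt_or_ge 0 μ with hμ | hμ
  · refine hΔ.notMem_hull_diff δ hδ ?_
    have h := PointedCone.smul_mem _ (inv_nonneg.2 hμ.le) (add_mem hz hz')
    rwa [hsum, smul_smul, inv_mul_cancel₀ hμ.ne', one_smul] at h
  · have hz0 : z = 0 := by
      by_contra hz0
      have h1 := inner_pos_of_mem_hull hpos hz hz0
      have h2 := inner_nonneg_of_mem_hull (fun γ hγ => (hpos γ hγ).le) hz'
      have h3 := congrArg (⟪·, p⟫) hsum
      simp only [inner_add_left, real_inner_smul_left] at h3
      nlinarith [hΔ.inner_pos δ hδ]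
    rw [hz0, add_zero] at hβ_eq
    have hb := hΦ.norm_eq_one β hβ
    rw [hβ_eq, norm_smul, hΦ.norm_eq_one δ hδΦ, mul_one, Real.norm_of_nonneg b.2] at hb
    exact hβδ (by rw [hβ_eq, hb, one_smul])

lemma IsSimpleSystem.exists_mem_closure_apply_mem (hΦ : IsRootSet Φ)
    (hp : ∀ α ∈ Φ, ⟪α, p⟫ ≠ 0) (hΔ : IsSimpleSystem Φ p Δ) {β : V} (hβ : β ∈ Φ)
    (hβp : 0 < ⟪β, p⟫) : ∃ u ∈ Subgroup.closure (reflectionAlong '' (Δ : Set V)), u β ∈ Δ := by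
  set W' := Subgroup.closure (reflectionAlong '' (Δ : Set V))
  -- a positive root of least height `⟪·, p⟫` in the `W'`-orbit of `β` is simple
  obtain ⟨_, ⟨hγΦ, hγp, u, hu, rfl⟩, hmin⟩ := Set.exists_min_image
    {γ | γ ∈ Φ ∧ 0 < ⟪γ, p⟫ ∧ ∃ u ∈ W', u β = γ} (⟪·, p⟫) (hΦ.finite.subset fun γ hγ => hγ.1)
    ⟨β, hβ, hβp, 1, W'.one_mem, rfl⟩
  obtain ⟨δ, hδ, hacute⟩ : ∃ δ ∈ Δ, 0 < ⟪δ, u β⟫ := by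
    by_contra! h
    have := inner_nonneg_of_mem_hull (p := -u β)
      (fun γ hγ => by rw [inner_neg_right]; exact neg_nonneg.2 (h γ hγ)) (hΔ.mem_hull _ hγΦ hγp)
    rw [inner_neg_right, neg_nonneg, real_inner_self_eq_norm_sq, hΦ.norm_eq_one _ hγΦ] at this
    norm_num at this
  refine ⟨u, hu, ?_⟩
  by_contra hne
  have hδΦ := hΔ.subset hδ
  have hlt : ⟪reflectionAlong δ (u β), p⟫ < ⟪u β, p⟫ := by
    rw [reflectionAlong_apply_of_norm_eq_one (hΦ.norm_eq_one δ hδΦ), inner_sub_left,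
      real_inner_smul_left]
    nlinarith [hΔ.inner_pos δ hδ]
  refine hlt.not_ge (hmin _ ⟨hΦ.reflectionAlong_mem δ hδΦ _ hγΦ,
    hΔ.inner_reflectionAlong_pos hΦ hp hδ hγΦ hγp fun h => hne (h ▸ hδ),
    reflectionAlong δ * u, W'.mul_mem (Subgroup.subset_closure ⟨δ, hδ, rfl⟩) hu, rfl⟩)

lemma IsSimpleSystem.reflectionAlong_mem_closure (hΦ : IsRootSet Φ)
    (hp : ∀ α ∈ Φ, ⟪α, p⟫ ≠ 0) (hΔ : IsSimpleSystem Φ p Δ) {α : V} (hα : α ∈ Φ) :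
    reflectionAlong α ∈ Subgroup.closure (reflectionAlong '' (Δ : Set V)) := by
  wlog hαp : 0 < ⟪α, p⟫ generalizing α
  · have := this (hΦ.neg_mem α hα)
      (by rw [inner_neg_left]; exact neg_pos.2 ((not_lt.1 hαp).lt_of_ne (hp α hα)))
    rwa [reflectionAlong_neg] at this
  obtain ⟨u, hu, hδ⟩ := hΔ.exists_mem_closure_apply_mem hΦ hp hα hαp
  have : reflectionAlong α = u⁻¹ * reflectionAlong (u α) * u := by
    rw [← mul_reflectionAlong_mul_inv]; group
  rw [this]
  exact mul_mem (mul_mem (inv_mem hu) (Subgroup.subset_closure ⟨_, hδ, rfl⟩)) hu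

lemma IsRootSet.list_prod_apply_mem (hΦ : IsRootSet Φ) {l : List (V ≃ₗᵢ[ℝ] V)}
    (hl : ∀ t ∈ l, t ∈ reflectionAlong '' Φ) {β : V} (hβ : β ∈ Φ) : l.prod β ∈ Φ := by
  induction l with
  | nil => exact hβ
  | cons t l ih =>
    obtain ⟨α, hα, rfl⟩ := hl t List.mem_cons_self
    rw [List.prod_cons, LinearIsometryEquiv.coe_mul, Function.comp_apply]
    exact hΦ.reflectionAlong_mem α hα _ (ih fun s hs => hl s (List.mem_cons_of_mem _ hs))

lemma IsSimpleSystem.exists_prod_eq_prod_mul_reflectionAlong (hΦ : IsRootSet Φ)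
    (hp : ∀ α ∈ Φ, ⟪α, p⟫ ≠ 0) (hΔ : IsSimpleSystem Φ p Δ) {l : List (V ≃ₗᵢ[ℝ] V)}
    (hl : ∀ t ∈ l, t ∈ reflectionAlong '' (Δ : Set V)) {β : V} (hβ : β ∈ Φ)
    (hβp : 0 < ⟪β, p⟫) (hlβ : ⟪l.prod β, p⟫ < 0) :
    ∃ l' : List (V ≃ₗᵢ[ℝ] V), (∀ t ∈ l', t ∈ reflectionAlong '' (Δ : Set V)) ∧
      l'.length + 1 = l.length ∧ l.prod = l'.prod * reflectionAlong β := by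
  induction l with
  | nil => exact absurd hβp (by simpa using hlβ.le)
  | cons t l ih =>
    have hl' : ∀ s ∈ l, s ∈ reflectionAlong '' (Δ : Set V) :=
      fun s hs => hl s (List.mem_cons_of_mem _ hs)
    obtain ⟨δ, hδ, rfl⟩ := hl t List.mem_cons_self
    have hγ : l.prod β ∈ Φ :=
      hΦ.list_prod_apply_mem (fun s hs => Set.image_mono hΔ.subset (hl' s hs)) hβ
    rcases (hp _ hγ).lt_or_gt with hneg | hpos
    · obtain ⟨l', hl'Δ, hlen, hprod⟩ := ih hl' hneg
      refine ⟨reflectionAlong δ :: l', ?_, by simp [hlen], by simp [hprod, mul_assoc]⟩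
      exact List.forall_mem_cons.2 ⟨⟨δ, hδ, rfl⟩, hl'Δ⟩
    · -- `reflectionAlong δ` makes the positive root `l.prod β` negative, so it is `δ`
      have hγδ : l.prod β = δ := by
        by_contra hne
        exact (hΔ.inner_reflectionAlong_pos hΦ hp hδ hγ hpos hne).not_gt (by simpa using hlβ)
      refine ⟨l, hl', rfl, ?_⟩
      rw [List.prod_cons, ← hγδ, ← mul_reflectionAlong_mul_inv, inv_mul_cancel_right]

lemma IsSimpleSystem.list_prod_eq_one (hΦ : IsRootSet Φ) (hp : ∀ α ∈ Φ, ⟪α, p⟫ ≠ 0)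
    (hΔ : IsSimpleSystem Φ p Δ) {l : List (V ≃ₗᵢ[ℝ] V)}
    (hl : ∀ t ∈ l, t ∈ reflectionAlong '' (Δ : Set V)) (hlp : l.prod p = p) : l.prod = 1 := by
  induction hn : l.length using Nat.strong_induction_on generalizing l with
  | _ n ih =>
  rcases l.eq_nil_or_concat with rfl | ⟨l₀, t, rfl⟩
  · rfl
  rw [List.concat_eq_append] at hl hlp hn ⊢
  have hl₀ : ∀ s ∈ l₀, s ∈ reflectionAlong '' (Δ : Set V) :=
    fun s hs => hl s (List.mem_append_left _ hs)
  obtain ⟨δ, hδ, rfl⟩ := hl t (by simp)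
  have hneg : ⟪l₀.prod δ, p⟫ < 0 := by
    have h := (l₀ ++ [reflectionAlong δ]).prod.inner_map_map δ p
    rw [hlp, List.prod_append, List.prod_singleton, LinearIsometryEquiv.coe_mul,
      Function.comp_apply, reflectionAlong_apply_self, map_neg, inner_neg_left] at h
    linarith [hΔ.inner_pos δ hδ]
  obtain ⟨l', hl', hlen, hprod⟩ := hΔ.exists_prod_eq_prod_mul_reflectionAlong hΦ hp hl₀
    (hΔ.subset hδ) (hΔ.inner_pos δ hδ) hneg
  have heq : (l₀ ++ [reflectionAlong δ]).prod = l'.prod := by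
    rw [List.prod_append, List.prod_singleton, hprod, mul_assoc, reflectionAlong_mul_self, mul_one]
  rw [heq] at hlp ⊢
  exact ih l'.length (by simp at hn; omega) hl' hlp rfl

lemma inv_image_reflectionAlong (s : Set V) : (reflectionAlong '' s)⁻¹ = reflectionAlong '' s := by
  ext t
  rw [Set.mem_inv]
  constructor <;> rintro ⟨v, hv, h⟩ <;> refine ⟨v, hv, ?_⟩
  · rw [← inv_inv t, ← h, reflectionAlong_inv]
  · rw [← h, reflectionAlong_inv]

lemma IsRootSet.eq_one_of_mem_closure_of_apply_eq (hΦ : IsRootSet Φ)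
    (hp : ∀ α ∈ Φ, ⟪α, p⟫ ≠ 0) {w : V ≃ₗᵢ[ℝ] V}
    (hw : w ∈ Subgroup.closure (reflectionAlong '' Φ)) (hwp : w p = p) : w = 1 := by
  obtain ⟨Δ, hΔ⟩ := exists_isSimpleSystem hΦ.finite p
  have hw' : w ∈ Subgroup.closure (reflectionAlong '' (Δ : Set V)) := by
    refine (Subgroup.closure_le _).2 ?_ hw
    rintro _ ⟨α, hα, rfl⟩
    exact hΔ.reflectionAlong_mem_closure hΦ hp hα
  rw [← Subgroup.mem_toSubmonoid, Subgroup.closure_toSubmonoid, inv_image_reflectionAlong,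
    Set.union_self] at hw'
  obtain ⟨l, hl, rfl⟩ := Submonoid.exists_list_of_mem_closure hw'
  exact hΔ.list_prod_eq_one hΦ hp hl hwp

end RootSystem

lemma exists_mem_forall_inner_ne_zero (F : Submodule ℝ V) {Φ : Set V} (hΦ : Φ.Finite)
    (h : ∀ α ∈ Φ, α ∉ Fᗮ) : ∃ p ∈ F, ∀ α ∈ Φ, ⟪α, p⟫ ≠ 0 := by
  have := hΦ.fintype
  obtain ⟨x, -, hx⟩ := Set.exists_of_ssubset <|
    Submodule.iUnion_ssubset_of_forall_ne_top_of_card_lt Finset.univ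
      (fun α : Φ => LinearMap.ker ((innerₛₗ ℝ (α : V)).comp F.subtype))
      (fun α hα => h α α.2 <| (Submodule.mem_orthogonal' _ _).2 fun y hy =>
        LinearMap.congr_fun (LinearMap.ker_eq_top.1 hα) ⟨y, hy⟩) (by simp [hΦ])
  exact ⟨x, x.2, fun α hα hx0 =>
    hx (Set.mem_biUnion (x := (⟨α, hα⟩ : Φ)) (Finset.mem_univ _) (LinearMap.mem_ker.2 hx0))⟩

def roots (W : Subgroup (V ≃ₗᵢ[ℝ] V)) : Set V := {α | ‖α‖ = 1 ∧ reflectionAlong α ∈ W}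

variable {W : Subgroup (V ≃ₗᵢ[ℝ] V)}

lemma isRootSet_roots (hW : Finite W) : IsRootSet (roots W) where
  finite := ((Set.toFinite (W : Set (V ≃ₗᵢ[ℝ] V))).biUnion
    fun t _ => finite_setOf_reflectionAlong_eq t).subset
      fun α hα => Set.mem_biUnion hα.2 ⟨hα.1, rfl⟩
  norm_eq_one _ hα := hα.1
  neg_mem _ hα := ⟨by rw [norm_neg]; exact hα.1, by rw [reflectionAlong_neg]; exact hα.2⟩
  reflectionAlong_mem _ hα _ hβ := ⟨by rw [LinearIsometryEquiv.norm_map]; exact hβ.1, by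
    rw [← mul_reflectionAlong_mul_inv]; exact W.mul_mem (W.mul_mem hα.2 hβ.2) (W.inv_mem hα.2)⟩

lemma le_closure_roots (hWrefl : W = Subgroup.closure {t | t ∈ W ∧ IsEuclideanReflection t}) :
    W ≤ Subgroup.closure (reflectionAlong '' roots W) := by
  refine hWrefl.trans_le (Subgroup.closure_mono ?_)
  rintro t ⟨htW, ht⟩
  obtain ⟨v, hv, rfl⟩ := isEuclideanReflection_iff.1 ht
  exact ⟨v, ⟨hv, htW⟩, rfl⟩

lemma exists_mem_roots_mem_orthogonal_fixedSpace (hW : Finite W)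
    (hWrefl : W = Subgroup.closure {t | t ∈ W ∧ IsEuclideanReflection t}) {w : V ≃ₗᵢ[ℝ] V}
    (hw : w ∈ W) (hw1 : w ≠ 1) : ∃ α ∈ roots W, α ∈ (fixedSpace w)ᗮ := by
  by_contra! h
  obtain ⟨p, hpw, hp⟩ :=
    exists_mem_forall_inner_ne_zero (fixedSpace w) (isRootSet_roots hW).finite h
  exact hw1 ((isRootSet_roots hW).eq_one_of_mem_closure_of_apply_eq hp
    (le_closure_roots hWrefl hw) (mem_fixedSpace.1 hpw))

variable [FiniteDimensional ℝ V]

lemma exists_reflection_list_length_le_finrank_sub (hW : Finite W)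
    (hWrefl : W = Subgroup.closure {t | t ∈ W ∧ IsEuclideanReflection t}) {w : V ≃ₗᵢ[ℝ] V}
    (hw : w ∈ W) : ∃ l : List (V ≃ₗᵢ[ℝ] V), (∀ t ∈ l, t ∈ W ∧ IsEuclideanReflection t) ∧
      l.length ≤ finrank ℝ V - finrank ℝ (fixedSpace w) ∧ l.prod = w := by
  induction hn : finrank ℝ V - finrank ℝ (fixedSpace w) using Nat.strong_induction_on
    generalizing w with
  | _ n ih =>
  rcases eq_or_ne w 1 with rfl | hw1
  · exact ⟨[], by simp, by simp, rfl⟩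
  obtain ⟨α, ⟨hα1, hαW⟩, hα⟩ := exists_mem_roots_mem_orthogonal_fixedSpace hW hWrefl hw hw1
  have hα0 : α ≠ 0 := by rintro rfl; simp at hα1
  have hlt := Submodule.finrank_lt_finrank_of_lt
    (fixedSpace_lt_fixedSpace_reflectionAlong_mul hα0 hα)
  have := Submodule.finrank_le (fixedSpace (reflectionAlong α * w))
  obtain ⟨l, hl, hlen, hprod⟩ := ih _ (by omega) (W.mul_mem hαW hw) rfl
  refine ⟨reflectionAlong α :: l, List.forall_mem_cons.2
    ⟨⟨hαW, isEuclideanReflection_iff.2 ⟨α, hα1, rfl⟩⟩, hl⟩, by simp; omega, ?_⟩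
  rw [List.prod_cons, hprod, ← mul_assoc, reflectionAlong_mul_self, one_mul]

end FiniteReflectionGroup

open FiniteReflectionGroup in
/-- Let `W` be a finite real reflection group on `V = ℝⁿ`.  For every
`w ∈ W`, the absolute reflection length `ℓ_T(w)` equals the codimension of the fixed
space of `w`, i.e. `ℓ_T(w) = n − dim Fix(w)`, where `Fix(w) = ker(w − Id)`. -/
theorem absoluteLength_eq_codim_fixedSpace
    {V : Type*} [NormedAddCommGroup V] [InnerProductSpace ℝ V] [FiniteDimensional ℝ V]
    (W : Subgroup (V ≃ₗᵢ[ℝ] V)) (hWfin : Finite W)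
    (hWrefl : W = Subgroup.closure {t | t ∈ W ∧ IsEuclideanReflection t})
    (w : V ≃ₗᵢ[ℝ] V) (hw : w ∈ W) :
    absoluteLength W w =
      Module.finrank ℝ V -
        Module.finrank ℝ (LinearMap.ker ((w : V →ₗ[ℝ] V) - LinearMap.id)) := by
  change sInf _ = Module.finrank ℝ V - Module.finrank ℝ (fixedSpace w)
  obtain ⟨l, hl, hlen, hprod⟩ := exists_reflection_list_length_le_finrank_sub hWfin hWrefl hw
  apply le_antisymm
  · exact le_trans (Nat.sInf_le ⟨l, hl, rfl, hprod⟩) hlen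
  · refine le_csInf ⟨l.length, l, hl, rfl, hprod⟩ ?_
    rintro _ ⟨l', hl', rfl, rfl⟩
    have := finrank_le_finrank_fixedSpace_prod_add_length l' fun t ht => (hl' t ht).2
    omega
end

section
/- Let W be a finite real reflection group on V, γ a Coxeter element, ϑ = (γ−1)⁻¹, and ρ₁, …, ρ_k positive roots such that the k×k matrix with entries (ϑ(ρ_i), ρ_j) is lower triangular with nonzero diagonal (i.e., (ϑ(ρ_i), ρ_j) = 0 for all i < j). Then ρ₁, …, ρ_k are linearly independent, and hence t_{ρ₁} ⋯ t_{ρ_k} is T-reduced. -/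
open scoped RealInnerProductSpace

/-! Pair a linear relation among the `ρ i` with `ϑ (ρ a)` for the least index `a` in its
support: triangularity kills every other term, and the diagonal entry is nonzero because
`‖ϑ ρ + ρ‖ = ‖γ (ϑ ρ)‖ = ‖ϑ ρ‖` forces `⟪ϑ ρ, ρ⟫ = -‖ρ‖² / 2`. For the absolute length, a
product of `m` reflections moves (i.e. `w - 1` has image in) a space of dimension at most `m`,
while by Carter's argument a product of reflections in linearly independent roots fixes only the
orthogonal complement of their span, so it moves a space of dimension `k`. -/

open Module Submodule

theorem linearIndependent_of_dual_lowerTriangular {R M ι : Type*} [CommRing R] [NoZeroDivisors R]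
    [AddCommGroup M] [Module R M] [LinearOrder ι] {v : ι → M} (φ : ι → Dual R M)
    (htri : ∀ i j, i < j → φ i (v j) = 0) (hdiag : ∀ i, φ i (v i) ≠ 0) :
    LinearIndependent R v := by
  rw [linearIndependent_iff]
  intro l hl
  induction l using Finsupp.induction_on_min with
  | zero => rfl
  | single_add a b f hlt hb _ =>
    -- `φ a` kills every `v c` with `c` in the support of `f`, all of which lie above `a`
    have hf : φ a (Finsupp.linearCombination R v f) = 0 := by
      rw [Finsupp.linearCombination_apply, Finsupp.sum, map_sum]
      exact Finset.sum_eq_zero fun c hc => by rw [map_smul, htri a c (hlt c hc), smul_zero]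
    have hab : b * φ a (v a) = 0 := by
      simpa [hf] using congrArg (φ a) hl
    exact absurd hab (mul_ne_zero hb (hdiag a))

section

variable {V : Type*} [NormedAddCommGroup V] [InnerProductSpace ℝ V]

theorem inner_eq_neg_half_of_apply_sub_self (γ : V →ₗᵢ[ℝ] V) {x v : V} (h : γ x - x = v) :
    ⟪x, v⟫ = -(⟪v, v⟫ / 2) := by
  have hγ : ⟪x + v, x + v⟫ = ⟪x, x⟫ := by
    rw [← h, add_sub_cancel, γ.inner_map_map]
  rw [real_inner_add_add_self] at hγ
  linarith

def moveSpace (w : V ≃ₗᵢ[ℝ] V) : Submodule ℝ V :=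
  LinearMap.range ((w : V →ₗ[ℝ] V) - LinearMap.id)

theorem moveSpace_le_iff {w : V ≃ₗᵢ[ℝ] V} {S : Submodule ℝ V} :
    moveSpace w ≤ S ↔ ∀ x, w x - x ∈ S := by
  simp [moveSpace, SetLike.le_def]

theorem apply_sub_self_mem_moveSpace (w : V ≃ₗᵢ[ℝ] V) (x : V) : w x - x ∈ moveSpace w :=
  moveSpace_le_iff.mp le_rfl x

theorem moveSpace_one : moveSpace (1 : V ≃ₗᵢ[ℝ] V) = ⊥ :=
  eq_bot_iff.mpr (moveSpace_le_iff.mpr fun x => by simp)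

theorem moveSpace_mul_le (a b : V ≃ₗᵢ[ℝ] V) : moveSpace (a * b) ≤ moveSpace a ⊔ moveSpace b :=
  moveSpace_le_iff.mpr fun x => by
    rw [show (a * b) x - x = (a (b x) - b x) + (b x - x) by simp]
    exact add_mem_sup (apply_sub_self_mem_moveSpace a _) (apply_sub_self_mem_moveSpace b x)

theorem moveSpace_list_prod_le {S : Submodule ℝ V} (l : List (V ≃ₗᵢ[ℝ] V))
    (h : ∀ s ∈ l, moveSpace s ≤ S) : moveSpace l.prod ≤ S := by
  induction l with
  | nil => simp [moveSpace_one]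
  | cons a l ih =>
    rw [List.prod_cons]
    exact (moveSpace_mul_le a _).trans <| sup_le (h a List.mem_cons_self)
      (ih fun s hs => h s (List.mem_cons_of_mem a hs))

theorem moveSpace_le_span_of_reflection {t : V ≃ₗᵢ[ℝ] V} {ρ : V}
    (ht : ∀ x, t x = x - (2 * ⟪ρ, x⟫ / ⟪ρ, ρ⟫) • ρ) : moveSpace t ≤ ℝ ∙ ρ :=
  moveSpace_le_iff.mpr fun x => by
    rw [ht, sub_sub_cancel_left]
    exact neg_mem (smul_mem _ _ (mem_span_singleton_self ρ))

theorem finrank_moveSpace_list_prod_le [FiniteDimensional ℝ V] (l : List (V ≃ₗᵢ[ℝ] V))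
    (hl : ∀ s ∈ l, IsEuclideanReflection s) : finrank ℝ (moveSpace l.prod) ≤ l.length := by
  induction l with
  | nil => rw [List.prod_nil, moveSpace_one, finrank_bot, List.length_nil]
  | cons a l ih =>
    obtain ⟨σ, hσ0, hσ⟩ := hl a List.mem_cons_self
    have ha : finrank ℝ (moveSpace a) ≤ 1 :=
      (finrank_mono (moveSpace_le_span_of_reflection hσ)).trans (finrank_span_singleton hσ0).le
    calc finrank ℝ (moveSpace (a * l.prod))
        ≤ finrank ℝ ↥(moveSpace a ⊔ moveSpace l.prod) := finrank_mono (moveSpace_mul_le a _)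
      _ ≤ finrank ℝ (moveSpace a) + finrank ℝ (moveSpace l.prod) :=
        finrank_add_le_finrank_add_finrank _ _
      _ ≤ (a :: l).length := by
        have := ih fun s hs => hl s (List.mem_cons_of_mem a hs)
        simp only [List.length_cons]
        omega

theorem absoluteLength_eq_length [FiniteDimensional ℝ V] {W : Subgroup (V ≃ₗᵢ[ℝ] V)}
    {l : List (V ≃ₗᵢ[ℝ] V)} (hl : ∀ s ∈ l, s ∈ W ∧ IsEuclideanReflection s)
    (hlen : l.length ≤ finrank ℝ (moveSpace l.prod)) :
    absoluteLength W l.prod = l.length := by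
  refine le_antisymm (Nat.sInf_le ⟨l, hl, rfl, rfl⟩) (le_csInf ⟨_, l, hl, rfl, rfl⟩ ?_)
  rintro _ ⟨l', hl', rfl, hprod⟩
  calc l.length ≤ finrank ℝ (moveSpace l.prod) := hlen
    _ ≤ l'.length := hprod ▸ finrank_moveSpace_list_prod_le l' fun s hs => (hl' s hs).2

variable {k : ℕ} {ρ : Fin k → V} {t : Fin k → V ≃ₗᵢ[ℝ] V}

theorem moveSpace_ofFn_prod_le_span (ht : ∀ i x, t i x = x - (2 * ⟪ρ i, x⟫ / ⟪ρ i, ρ i⟫) • ρ i) :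
    moveSpace (List.ofFn t).prod ≤ span ℝ (Set.range ρ) := by
  refine moveSpace_list_prod_le _ fun s hs => ?_
  obtain ⟨i, rfl⟩ := List.mem_ofFn.mp hs
  exact (moveSpace_le_span_of_reflection (ht i)).trans
    (span_singleton_le_iff_mem _ _ |>.mpr (subset_span (Set.mem_range_self i)))

theorem inner_eq_zero_of_ofFn_prod_apply_eq (hρ : LinearIndependent ℝ ρ)
    (ht : ∀ i x, t i x = x - (2 * ⟪ρ i, x⟫ / ⟪ρ i, ρ i⟫) • ρ i) {v : V}
    (hv : (List.ofFn t).prod v = v) (i : Fin k) : ⟪ρ i, v⟫ = 0 := by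
  induction k with
  | zero => exact i.elim0
  | succ k ih =>
    obtain ⟨htail, hhead⟩ := linearIndependent_finSucc.mp hρ
    set u := (List.ofFn fun i => t i.succ).prod v
    set c := 2 * ⟪ρ 0, u⟫ / ⟪ρ 0, ρ 0⟫
    have hu : u - v ∈ span ℝ (Set.range (Fin.tail ρ)) :=
      moveSpace_ofFn_prod_le_span (fun i x => ht i.succ x) (apply_sub_self_mem_moveSpace _ v)
    have htu : u - c • ρ 0 = v := by
      rw [← ht, ← hv, List.ofFn_succ, List.prod_cons]
      rfl
    -- `u - v = c • ρ 0` lies in the span of the other roots, which forces `c = 0`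
    have hc : c = 0 := by
      by_contra hc
      refine hhead ((smul_mem_iff _ hc).mp ?_)
      rwa [← htu, sub_sub_cancel] at hu
    have hρu : ⟪ρ 0, u⟫ = 0 := by
      simpa [c, hρ.ne_zero 0] using hc
    have huv : u = v := by
      simpa [hc] using htu
    cases i using Fin.cases with
    | zero => rwa [← huv]
    | succ i => exact ih htail (fun i x => ht i.succ x) huv i

theorem le_finrank_moveSpace_ofFn_prod [FiniteDimensional ℝ V] (hρ : LinearIndependent ℝ ρ)
    (ht : ∀ i x, t i x = x - (2 * ⟪ρ i, x⟫ / ⟪ρ i, ρ i⟫) • ρ i) :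
    k ≤ finrank ℝ (moveSpace (List.ofFn t).prod) := by
  set w := (List.ofFn t).prod
  set K := span ℝ (Set.range ρ)
  have hker : LinearMap.ker ((w : V →ₗ[ℝ] V) - LinearMap.id) ≤ Kᗮ := fun v hv => by
    have hv : w v = v := sub_eq_zero.mp hv
    refine (isOrtho_span.mpr ?_).ge (mem_span_singleton_self v)
    rintro _ ⟨i, rfl⟩ _ rfl
    exact inner_eq_zero_of_ofFn_prod_apply_eq hρ ht hv i
  have hK : finrank ℝ K = k := by
    rw [finrank_span_eq_card hρ, Fintype.card_fin]
  have := finrank_mono hker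
  have := K.finrank_add_finrank_orthogonal
  have := LinearMap.finrank_range_add_finrank_ker ((w : V →ₗ[ℝ] V) - LinearMap.id)
  have := K.finrank_le
  unfold moveSpace
  omega

end

theorem linearIndependent_of_theta_lower_triangular_general
    {V : Type*} [NormedAddCommGroup V] [InnerProductSpace ℝ V] [FiniteDimensional ℝ V]
    (W : Subgroup (V ≃ₗᵢ[ℝ] V))
    (γ : V ≃ₗᵢ[ℝ] V)
    (ϑ : V →ₗ[ℝ] V) (hϑ : ∀ v : V, γ (ϑ v) - ϑ v = v)
    (k : ℕ) (ρ : Fin k → V) (hρ : ∀ i, ρ i ≠ 0)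
    (t : Fin k → (V ≃ₗᵢ[ℝ] V)) (htW : ∀ i, t i ∈ W)
    (ht : ∀ i x, t i x = x - (2 * ⟪ρ i, x⟫ / ⟪ρ i, ρ i⟫) • ρ i)
    (htri : ∀ i j : Fin k, i < j → ⟪ϑ (ρ i), ρ j⟫ = 0) :
    LinearIndependent ℝ ρ ∧ absoluteLength W (List.ofFn t).prod = k := by
  have hdiag : ∀ i, ⟪ϑ (ρ i), ρ i⟫ ≠ 0 := fun i => by
    rw [inner_eq_neg_half_of_apply_sub_self γ.toLinearIsometry (hϑ (ρ i))]
    simpa using hρ i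
  have hli : LinearIndependent ℝ ρ :=
    linearIndependent_of_dual_lowerTriangular (fun i => innerₛₗ ℝ (ϑ (ρ i))) htri hdiag
  have hrefl : ∀ s ∈ List.ofFn t, s ∈ W ∧ IsEuclideanReflection s := by
    simp only [List.mem_ofFn]
    rintro _ ⟨i, rfl⟩
    exact ⟨htW i, ρ i, hρ i, ht i⟩
  refine ⟨hli, ?_⟩
  simpa only [List.length_ofFn] using absoluteLength_eq_length hrefl
    (by simpa only [List.length_ofFn] using le_finrank_moveSpace_ofFn_prod hli ht)

/-- Let `W` be a finite real reflection group on `V`, `γ` a Coxeter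
element, `ϑ = (γ−1)⁻¹`, and `ρ₁, …, ρ_k` positive roots such that the `k×k` matrix with
entries `(ϑ(ρ_i), ρ_j)` is lower triangular with nonzero diagonal (i.e.
`(ϑ(ρ_i), ρ_j) = 0` for all `i < j`).  Then `ρ₁, …, ρ_k` are linearly independent, and
hence `t_{ρ₁} ⋯ t_{ρ_k}` is `T`-reduced. -/
theorem linearIndependent_of_theta_lower_triangular
    {V : Type*} [NormedAddCommGroup V] [InnerProductSpace ℝ V] [FiniteDimensional ℝ V]
    (W : Subgroup (V ≃ₗᵢ[ℝ] V)) (hWfin : Finite W)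
    (hWrefl : W = Subgroup.closure {t | t ∈ W ∧ IsEuclideanReflection t})
    (γ : V ≃ₗᵢ[ℝ] V) (hγW : γ ∈ W)
    (hγfix : ∀ v : V, γ v = v → v = 0)
    (ϑ : V →ₗ[ℝ] V) (hϑ : ∀ v : V, γ (ϑ v) - ϑ v = v)
    (k : ℕ) (ρ : Fin k → V) (hρ : ∀ i, ρ i ≠ 0)
    (t : Fin k → (V ≃ₗᵢ[ℝ] V)) (htW : ∀ i, t i ∈ W)
    (ht : ∀ i x, t i x = x - (2 * ⟪ρ i, x⟫ / ⟪ρ i, ρ i⟫) • ρ i)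
    (htri : ∀ i j : Fin k, i < j → ⟪ϑ (ρ i), ρ j⟫ = 0) :
    LinearIndependent ℝ ρ ∧ absoluteLength W (List.ofFn t).prod = k :=
  linearIndependent_of_theta_lower_triangular_general W γ ϑ hϑ k ρ hρ t htW ht htri
end

section
/- Let 𝒜̃ be the covering noncrossing algebra of a finite Coxeter group W (generated by α_t, t ∈ T, with relations α_t² = 0 and Σ_{t₁t₂=w, ℓ_T(w)=2} α_{t₁}α_{t₂} = 0). For t ∈ T define the linear map ∇_t : 𝒜̃ → 𝒜̃ on monomials by ∇_t(α_{t₁}⋯α_{t_k}) = Σ_{i=1}^{k} (−1)^{i−1} δ_{t,t_i} α_{t₁^{t_i}} ⋯ α_{t_{i−1}^{t_i}} α_{t_{i+1}} ⋯ α_{t_k}, where s^u := u⁻¹su. Then the ∇_t satisfy ∇_t² = 0 for all t ∈ T, and Σ_{(t₁,t₂): t₁t₂=w} ∇_{t₁}∇_{t₂} = 0 for all w of absolute length 2; hence they define an action of 𝒜̃ on itself. -/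
open scoped Classical

/-- The absolute (reflection) length of `w`. -/
noncomputable def absLen {B : Type*} {W : Type*} [Group W] {M : CoxeterMatrix B}
    (cs : CoxeterSystem M W) (w : W) : ℕ :=
  sInf {k : ℕ | ∃ l : List W, (∀ t ∈ l, cs.IsReflection t) ∧ l.length = k ∧ l.prod = w}

/-- The set of reflections of a Coxeter system, as a type. -/
abbrev Refl {B : Type*} {W : Type*} [Group W] {M : CoxeterMatrix B}
    (cs : CoxeterSystem M W) : Type _ := {t : W // cs.IsReflection t}

/-- Conjugation `s^u := u⁻¹ s u` of a reflection by a group element, landing in the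
reflections again. -/
def conjR {B : Type*} {W : Type*} [Group W] {M : CoxeterMatrix B}
    {cs : CoxeterSystem M W} (s : Refl cs) (u : W) : Refl cs :=
  ⟨u⁻¹ * (s : W) * u, by have := s.2.conj u⁻¹; rwa [inv_inv] at this⟩

/-- The monomial `α_{t₁} ⋯ α_{t_k}` in the free algebra, for a list of reflections. -/
noncomputable def mono {B : Type*} {W : Type*} [Group W] {M : CoxeterMatrix B}
    (cs : CoxeterSystem M W) (l : List (Refl cs)) : FreeAlgebra ℂ (Refl cs) :=
  (l.map (FreeAlgebra.ι ℂ)).prod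

/-- The defining relations of the covering noncrossing algebra `𝒜̃`. -/
inductive CoverRel {B : Type*} {W : Type*} [Group W] [Fintype W] {M : CoxeterMatrix B}
    (cs : CoxeterSystem M W) :
    FreeAlgebra ℂ (Refl cs) → FreeAlgebra ℂ (Refl cs) → Prop
  | sq (t : Refl cs) :
      CoverRel cs (FreeAlgebra.ι ℂ t * FreeAlgebra.ι ℂ t) 0
  | sum (w : W) (h : absLen cs w = 2) :
      CoverRel cs
        (∑ p : Refl cs × Refl cs,
          if (p.1 : W) * (p.2 : W) = w then
            FreeAlgebra.ι ℂ p.1 * FreeAlgebra.ι ℂ p.2 else 0) 0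

/-!
On monomials each `∇_t` is a twisted derivation: `∇_t (α_s y) = δ_{t,s} y - α_{s^t} ∇_t y`.
Hence, for coefficients `c` on pairs of reflections,
`Σ c(a,b) ∇_a ∇_b (α_s y) = Σ_a c(a,s) ∇_a y - Σ_b c(s^b,b) ∇_b y + Σ c(a,b) α_{s^{ba}} ∇_a ∇_b y`.
If `c` is invariant under the Hurwitz move `(a, b) ↦ (a b a, a)` (which preserves the product
`a b`), the first two sums cancel and the coefficients `c(a,b) α_{s^{ba}}` are again invariant,
so induction on the length of the monomial gives `Σ c(a,b) ∇_a ∇_b = 0`. Both relations are of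
this form: the indicators of `{(t, t)}` and of `{(t₁, t₂) | t₁ t₂ = w}` are Hurwitz invariant.
-/

namespace Refl

variable {B W : Type*} [Group W] {M : CoxeterMatrix B} {cs : CoxeterSystem M W}

@[simp]
lemma coe_conjR (s : Refl cs) (u : W) : (conjR s u : W) = u⁻¹ * s * u := rfl

lemma conjR_conjR (s : Refl cs) (u v : W) : conjR (conjR s u) v = conjR s (u * v) :=
  Subtype.ext (by simp only [coe_conjR, mul_inv_rev]; group)

lemma conjR_eq_self_iff (s t : Refl cs) : conjR s t = t ↔ s = t := by
  rw [Subtype.ext_iff, Subtype.ext_iff, coe_conjR]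
  constructor
  · intro h
    calc (s : W) = t * ((t : W)⁻¹ * s * t) * (t : W)⁻¹ := by group
      _ = t := by rw [h]; group
  · intro h
    rw [h]; group

lemma coe_conjR_mul_self (s t : Refl cs) : (conjR s t : W) * t = t * s := by
  rw [coe_conjR, t.2.inv, mul_assoc, mul_assoc, t.2.mul_self, mul_one]

end Refl

open Refl

section Hurwitz

variable {B W : Type*} [Group W] {M : CoxeterMatrix B} {cs : CoxeterSystem M W}

def IsHurwitzInvariant {X : Type*} (c : Refl cs × Refl cs → X) : Prop :=
  ∀ a b : Refl cs, c (conjR b a, a) = c (a, b)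

lemma isHurwitzInvariant_ite_eq_diag {X : Type*} (t : Refl cs) (x y : X) :
    IsHurwitzInvariant (fun p : Refl cs × Refl cs => if p = (t, t) then x else y) := by
  intro a b
  by_cases ha : a = t
  · subst ha
    simp only [Prod.mk.injEq, conjR_eq_self_iff, and_true, true_and]
  · simp [ha]

lemma isHurwitzInvariant_comp_mul {X : Type*} (f : W → X) :
    IsHurwitzInvariant (fun p : Refl cs × Refl cs => f (p.1 * p.2)) := by
  intro a b
  simp only [coe_conjR_mul_self]

end Hurwitz

section TwistedDerivation

variable {B W : Type*} [Group W] [Fintype W] {M : CoxeterMatrix B} {cs : CoxeterSystem M W}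
  {R A : Type*} [CommRing R] [Ring A] [Algebra R A]

lemma span_closure_eq_top_of_adjoin_eq_top {s : Set A} (hs : Algebra.adjoin R s = ⊤) :
    Submodule.span R (Submonoid.closure s : Set A) = ⊤ := by
  rw [← Algebra.adjoin_eq_span, hs, Algebra.top_toSubmodule]

theorem sum_mul_nabla_nabla_eq_zero (g : Refl cs → A)
    (hg : Algebra.adjoin R (Set.range g) = ⊤) (nabla : Refl cs → A →ₗ[R] A)
    (h_one : ∀ t, nabla t 1 = 0)
    (h_mul : ∀ t s y, nabla t (g s * y) = (if t = s then y else 0) - g (conjR s t) * nabla t y)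
    (c : Refl cs × Refl cs → A) (hc : IsHurwitzInvariant c) (y : A) :
    ∑ p, c p * nabla p.1 (nabla p.2 y) = 0 := by
  have hy : y ∈ Submodule.span R (Submonoid.closure (Set.range g) : Set A) := by
    rw [span_closure_eq_top_of_adjoin_eq_top hg]; trivial
  induction hy using Submodule.span_induction generalizing c with
  | mem y hy =>
    induction hy using Submonoid.closure_induction_left generalizing c with
    | one => simp [h_one]
    | mul_left _ hx y _ ih =>
      obtain ⟨s, rfl⟩ := hx
      have h_twisted := ih (fun p => c p * g (conjR s (p.2 * p.1))) fun a b => by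
        simp only [hc a b, coe_conjR, mul_assoc, mul_inv_cancel_left]
      have h_cancel : ∑ p : Refl cs × Refl cs, c p * (if p.2 = s then nabla p.1 y else 0) =
          ∑ p : Refl cs × Refl cs, c p * (if p.1 = conjR s p.2 then nabla p.2 y else 0) := by
        rw [Fintype.sum_prod_type, Fintype.sum_prod_type_right]
        simp only [mul_ite, mul_zero, Finset.sum_ite_eq', Finset.mem_univ, if_true]
        exact Finset.sum_congr rfl fun a _ => by rw [hc a s]
      simp only [h_mul, map_sub, apply_ite (nabla _), map_zero, conjR_conjR, mul_sub,
        Finset.sum_sub_distrib, h_cancel, sub_sub_cancel, ← mul_assoc]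
      exact h_twisted
  | zero => simp
  | add y z _ _ hy hz => simp [mul_add, Finset.sum_add_distrib, hy c hc, hz c hc]
  | smul r y _ hy => simp [← Finset.smul_sum, hy c hc]

end TwistedDerivation

section CoverAlgebra

variable {B W : Type*} [Group W] [Fintype W] {M : CoxeterMatrix B} {cs : CoxeterSystem M W}

/-- The generator `α_s` of `𝒜̃`. -/
noncomputable abbrev coverGen (cs : CoxeterSystem M W) (s : Refl cs) : RingQuot (CoverRel cs) :=
  RingQuot.mkAlgHom ℂ (CoverRel cs) (FreeAlgebra.ι ℂ s)

def IsNablaFamily (nabla : Refl cs → RingQuot (CoverRel cs) →ₗ[ℂ] RingQuot (CoverRel cs)) :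
    Prop :=
  ∀ (t : Refl cs) (l : List (Refl cs)),
    nabla t (RingQuot.mkAlgHom ℂ (CoverRel cs) (mono cs l)) =
      ∑ i : Fin l.length, ((-1 : ℂ) ^ (i : ℕ)) •
        (if t = l.get i then
          RingQuot.mkAlgHom ℂ (CoverRel cs)
            (mono cs ((l.take (i : ℕ)).map (fun s => conjR s (l.get i : W))
              ++ l.drop ((i : ℕ) + 1)))
        else 0)

lemma adjoin_range_coverGen : Algebra.adjoin ℂ (Set.range (coverGen cs)) = ⊤ := by
  rw [show Set.range (coverGen cs) = RingQuot.mkAlgHom ℂ (CoverRel cs) '' Set.range (FreeAlgebra.ι ℂ)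
      from Set.range_comp _ _, ← AlgHom.map_adjoin, FreeAlgebra.adjoin_range_ι, Algebra.map_top,
    AlgHom.range_eq_top]
  exact RingQuot.mkAlgHom_surjective ℂ (CoverRel cs)

lemma mkAlgHom_mono_cons (s : Refl cs) (l : List (Refl cs)) :
    RingQuot.mkAlgHom ℂ (CoverRel cs) (mono cs (s :: l)) =
      coverGen cs s * RingQuot.mkAlgHom ℂ (CoverRel cs) (mono cs l) := by
  simp [mono]

lemma exists_mkAlgHom_mono_eq_of_mem_closure {y : RingQuot (CoverRel cs)}
    (hy : y ∈ Submonoid.closure (Set.range (coverGen cs))) :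
    ∃ l, RingQuot.mkAlgHom ℂ (CoverRel cs) (mono cs l) = y := by
  induction hy using Submonoid.closure_induction_left with
  | one => exact ⟨[], by simp [mono]⟩
  | mul_left _ hs _ _ ih =>
    obtain ⟨s, rfl⟩ := hs
    obtain ⟨l, rfl⟩ := ih
    exact ⟨s :: l, mkAlgHom_mono_cons s l⟩

namespace IsNablaFamily

variable {nabla : Refl cs → RingQuot (CoverRel cs) →ₗ[ℂ] RingQuot (CoverRel cs)}

lemma apply_one (h : IsNablaFamily nabla) (t : Refl cs) : nabla t 1 = 0 := by
  simpa [mono] using h t []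

lemma apply_coverGen_mul_mkAlgHom_mono (h : IsNablaFamily nabla) (t s : Refl cs)
    (l : List (Refl cs)) :
    nabla t (coverGen cs s * RingQuot.mkAlgHom ℂ (CoverRel cs) (mono cs l)) =
      (if t = s then RingQuot.mkAlgHom ℂ (CoverRel cs) (mono cs l) else 0) -
        coverGen cs (conjR s t) * nabla t (RingQuot.mkAlgHom ℂ (CoverRel cs) (mono cs l)) := by
  rw [← mkAlgHom_mono_cons, h, h]
  refine (Fin.sum_univ_succ (n := l.length) _).trans ?_
  rw [Finset.mul_sum, sub_eq_add_neg, ← Finset.sum_neg_distrib]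
  congr 1
  · simp
  · refine Finset.sum_congr rfl fun k _ => ?_
    rw [show (s :: l).get k.succ = l.get k from rfl]
    split_ifs with htk
    · subst htk
      simp only [Fin.val_succ, pow_succ, mul_neg_one, List.take_succ_cons, List.map_cons,
        List.cons_append, List.drop_succ_cons, mkAlgHom_mono_cons, mul_smul_comm]
      exact neg_smul (M := RingQuot (CoverRel cs)) _ _
    · simp

lemma apply_coverGen_mul (h : IsNablaFamily nabla) (t s : Refl cs) (y : RingQuot (CoverRel cs)) :
    nabla t (coverGen cs s * y) =
      (if t = s then y else 0) - coverGen cs (conjR s t) * nabla t y := by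
  have hy : y ∈ Submodule.span ℂ (Submonoid.closure (Set.range (coverGen cs)) : Set _) := by
    rw [span_closure_eq_top_of_adjoin_eq_top adjoin_range_coverGen]; trivial
  induction hy using Submodule.span_induction with
  | mem y hy =>
    obtain ⟨l, rfl⟩ := exists_mkAlgHom_mono_eq_of_mem_closure hy
    exact h.apply_coverGen_mul_mkAlgHom_mono t s l
  | zero => simp
  | add y z _ _ hy hz =>
    simp only [mul_add, map_add, hy, hz]
    split_ifs <;> abel
  | smul r y _ hy =>
    simp only [mul_smul_comm, map_smul, hy, smul_sub, smul_ite, smul_zero]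

end IsNablaFamily

end CoverAlgebra

/-- Let `𝒜̃` be the covering noncrossing algebra of a finite Coxeter
group `W`.  The skew-derivations `∇_t` (given on monomials by
`∇_t(α_{t₁}⋯α_{t_k}) = Σ_i (−1)^{i−1} δ_{t,t_i} α_{t₁^{t_i}}⋯α_{t_{i−1}^{t_i}}
α_{t_{i+1}}⋯α_{t_k}`) satisfy `∇_t² = 0` for all reflections `t`, and
`Σ_{(t₁,t₂): t₁t₂ = w} ∇_{t₁}∇_{t₂} = 0` for all `w` of absolute length `2`;
hence they define an action of the algebra `𝒜̃` on itself. -/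
theorem cover_nabla_relations (B : Type*) (W : Type*) [Group W] [Fintype W]
    (M : CoxeterMatrix B) (cs : CoxeterSystem M W)
    (nabla : Refl cs → (RingQuot (CoverRel cs) →ₗ[ℂ] RingQuot (CoverRel cs)))
    (hnabla : ∀ (t : Refl cs) (l : List (Refl cs)),
      nabla t (RingQuot.mkAlgHom ℂ (CoverRel cs) (mono cs l)) =
        ∑ i : Fin l.length, ((-1 : ℂ) ^ (i : ℕ)) •
          (if t = l.get i then
            RingQuot.mkAlgHom ℂ (CoverRel cs)
              (mono cs ((l.take (i : ℕ)).map (fun s => conjR s (l.get i : W))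
                ++ l.drop ((i : ℕ) + 1)))
          else 0)) :
    (∀ t : Refl cs, nabla t ∘ₗ nabla t = 0) ∧
      (∀ w : W, absLen cs w = 2 →
        ∑ p : Refl cs × Refl cs,
          (if (p.1 : W) * (p.2 : W) = w then nabla p.1 ∘ₗ nabla p.2 else 0) = 0) := by
  have key := sum_mul_nabla_nabla_eq_zero (coverGen cs) adjoin_range_coverGen nabla
    (IsNablaFamily.apply_one hnabla) (IsNablaFamily.apply_coverGen_mul hnabla)
  refine ⟨fun t => LinearMap.ext fun y => ?_, fun w _ => LinearMap.ext fun y => ?_⟩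
  · simpa [ite_mul] using key _ (isHurwitzInvariant_ite_eq_diag t 1 0) y
  · simpa [ite_mul, apply_ite (fun f : RingQuot (CoverRel cs) →ₗ[ℂ] _ => f y)] using
      key _ (isHurwitzInvariant_comp_mul fun u => if u = w then (1 : RingQuot (CoverRel cs)) else 0) y
end

section
/- Let 𝒜̃ be the covering noncrossing algebra of a finite Coxeter group W, which is a braided Hopf algebra in the Yetter–Drinfeld category over ℂW with comultiplication Δ(α_t) = α_t ⊗ 1 + 1 ⊗ α_t, counit ε(α_t) = 0, and antipode S(α_t) = −α_t. Then the antipode is given on monomials by S(α_{t₁}⋯α_{t_k}) = ε(t₁,…,t_k) · α_{t_k} α_{t_{k−1}^{t_k}} ⋯ α_{t₁^{t₂⋯t_k}}, where ε(t₁,…,t_k) = (−1)^k ∏_{i=2}^k (−1)^{ℓ(t_i⋯t_k)} and ℓ denotes Coxeter length. -/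
open scoped Classical

/-- The list of reflections underlying the image of a monomial under the antipode:
`S(α_{t₁}⋯α_{t_k}) = ± α_{t_k} α_{t_{k−1}^{t_k}} ⋯ α_{t₁^{t₂⋯t_k}}`. -/
def antiTuple {B : Type*} {W : Type*} [Group W] {M : CoxeterMatrix B}
    {cs : CoxeterSystem M W} : List (Refl cs) → List (Refl cs)
  | [] => []
  | t :: l => antiTuple l ++ [conjR t ((l.map Subtype.val).prod)]

/-- The sign `ε(t₁,…,t_k) = (−1)^k ∏_{i=2}^k (−1)^{ℓ(t_i⋯t_k)}` appearing in the formula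
for the antipode, where `ℓ` is the Coxeter length. -/
noncomputable def antiSign {B : Type*} {W : Type*} [Group W] {M : CoxeterMatrix B}
    (cs : CoxeterSystem M W) (l : List (Refl cs)) : ℂ :=
  (-1 : ℂ) ^ l.length *
    ∏ j ∈ Finset.Ico 1 l.length,
      (-1 : ℂ) ^ (cs.length (((l.drop j).map Subtype.val).prod))

/-!
The recursion `S(x α_t) = -α_t S(t·x)` lowers the degree by one: `t` acts on a monomial of
degree `k` by the sign `(-1)^{k ℓ(t)} = (-1)^k` (reflections have odd length) and by
conjugating every letter. Conjugation commutes with `antiTuple` and, as it preserves the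
parity of Coxeter length, leaves `antiSign` unchanged, so induction on the degree applies.
-/

section

variable {B W : Type*} [Group W] {M : CoxeterMatrix B}

lemma CoxeterSystem.length_conj_mod_two (cs : CoxeterSystem M W) (w u : W) :
    cs.length (u⁻¹ * w * u) % 2 = cs.length w % 2 := by
  have h₁ := cs.length_mul_mod_two (u⁻¹ * w) u
  have h₂ := cs.length_mul_mod_two u⁻¹ w
  rw [cs.length_inv] at h₂
  omega

lemma CoxeterSystem.neg_one_pow_length_mul {R : Type*} [Ring R] (cs : CoxeterSystem M W)
    (w₁ w₂ : W) :
    (-1 : R) ^ cs.length (w₁ * w₂) = (-1) ^ cs.length w₁ * (-1) ^ cs.length w₂ := by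
  rw [neg_one_pow_eq_pow_mod_two, cs.length_mul_mod_two, ← neg_one_pow_eq_pow_mod_two, pow_add]

lemma CoxeterSystem.neg_one_pow_length_conj {R : Type*} [Ring R] (cs : CoxeterSystem M W)
    (w u : W) : (-1 : R) ^ cs.length (u⁻¹ * w * u) = (-1) ^ cs.length w := by
  rw [neg_one_pow_eq_pow_mod_two, cs.length_conj_mod_two, ← neg_one_pow_eq_pow_mod_two]

variable {cs : CoxeterSystem M W}

@[simp] lemma conjR_val (s : Refl cs) (u : W) : (conjR s u : W) = u⁻¹ * s * u := rfl

@[simp] lemma conjR_one (s : Refl cs) : conjR s 1 = s := by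
  ext; simp

lemma conjR_conjR (s : Refl cs) (u v : W) : conjR (conjR s u) v = conjR s (u * v) := by
  ext; simp [mul_assoc]

lemma mk_mul_mul_inv_eq_conjR (s t : Refl cs) :
    (⟨t * s * (t : W)⁻¹, s.2.conj t⟩ : Refl cs) = conjR s t := by
  ext; simp [t.2.inv]

lemma prod_map_conjR (l : List (Refl cs)) (u : W) :
    ((l.map (conjR · u)).map Subtype.val).prod = u⁻¹ * (l.map Subtype.val).prod * u := by
  induction l with
  | nil => simp
  | cons t l ih =>
    simp only [List.map_cons, List.prod_cons, ih, conjR_val]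
    group

lemma antiTuple_map_conjR (l : List (Refl cs)) (u : W) :
    antiTuple (l.map (conjR · u)) = (antiTuple l).map (conjR · u) := by
  induction l with
  | nil => rfl
  | cons t l ih =>
    simp only [List.map_cons, antiTuple, ih, prod_map_conjR, List.map_append, List.map_nil,
      conjR_conjR]
    congr 3
    group

lemma antiTuple_append_singleton (l : List (Refl cs)) (t : Refl cs) :
    antiTuple (l ++ [t]) = t :: (antiTuple l).map (conjR · t) := by
  induction l with
  | nil => simp [antiTuple]
  | cons s l ih => simp [antiTuple, ih, conjR_conjR]

lemma antiSign_map_conjR (l : List (Refl cs)) (u : W) :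
    antiSign cs (l.map (conjR · u)) = antiSign cs l := by
  unfold antiSign
  rw [List.length_map]
  congr 1
  refine Finset.prod_congr rfl fun j _ => ?_
  rw [← List.map_drop, prod_map_conjR, cs.neg_one_pow_length_conj]

lemma antiSign_append_singleton (l : List (Refl cs)) (t : Refl cs) :
    antiSign cs (l ++ [t]) = (-1) ^ (l.length + 1) * antiSign cs l := by
  have hdrop : ∀ j ∈ Finset.Ico 1 (l.length + 1),
      (-1 : ℂ) ^ cs.length ((((l ++ [t]).drop j).map Subtype.val).prod)
        = -(-1 : ℂ) ^ cs.length (((l.drop j).map Subtype.val).prod) := by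
    intro j hj
    rw [List.drop_append_of_le_length (by simp at hj; omega), List.map_append,
      List.prod_append, cs.neg_one_pow_length_mul]
    simp [t.2.odd_length.neg_one_pow]
  unfold antiSign
  rw [List.length_append, List.length_singleton, Finset.prod_congr rfl hdrop]
  rcases l.eq_nil_or_concat' with rfl | ⟨l, s, rfl⟩
  · simp
  · simp only [Finset.prod_neg, Nat.card_Ico, List.length_append, List.length_singleton,
      Finset.prod_Ico_succ_top (Nat.le_add_left 1 l.length)]
    rw [List.drop_eq_nil_of_le (by simp)]
    simp only [Nat.add_sub_cancel, List.map_nil, List.prod_nil, cs.length_one, pow_zero]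
    ring

lemma mono_cons (t : Refl cs) (l : List (Refl cs)) :
    mono cs (t :: l) = FreeAlgebra.ι ℂ t * mono cs l := by
  simp [mono]

lemma mono_append_singleton (l : List (Refl cs)) (t : Refl cs) :
    mono cs (l ++ [t]) = mono cs l * FreeAlgebra.ι ℂ t := by
  simp [mono]

lemma map_mono_of_map_ι {A : Type*} [Semiring A] [Algebra ℂ A]
    (g : FreeAlgebra ℂ (Refl cs) →ₐ[ℂ] A) (f : A →ₐ[ℂ] A) (c : ℂ) (σ : Refl cs → Refl cs)
    (hf : ∀ s, f (g (FreeAlgebra.ι ℂ s)) = c • g (FreeAlgebra.ι ℂ (σ s)))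
    (l : List (Refl cs)) :
    f (g (mono cs l)) = c ^ l.length • g (mono cs (l.map σ)) := by
  induction l with
  | nil => simp [mono]
  | cons t l ih =>
    rw [List.map_cons, mono_cons, mono_cons, map_mul, map_mul, ih, hf, map_mul,
      smul_mul_smul_comm, List.length_cons, pow_succ']

end

theorem cover_antipode_formula_general (B : Type*) (W : Type*) [Group W] [Fintype W]
    (M : CoxeterMatrix B) (cs : CoxeterSystem M W)
    (φ : W →* (RingQuot (CoverRel cs) ≃ₐ[ℂ] RingQuot (CoverRel cs)))
    (hφ : ∀ (w t : W) (ht : cs.IsReflection t),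
      φ w (RingQuot.mkAlgHom ℂ (CoverRel cs) (FreeAlgebra.ι ℂ (⟨t, ht⟩ : Refl cs)))
        = ((-1 : ℂ) ^ cs.length w) •
            RingQuot.mkAlgHom ℂ (CoverRel cs)
              (FreeAlgebra.ι ℂ (⟨w * t * w⁻¹, ht.conj w⟩ : Refl cs)))
    (S : RingQuot (CoverRel cs) →ₗ[ℂ] RingQuot (CoverRel cs))
    (hS1 : S 1 = 1)
    (hSrec : ∀ (t : Refl cs) (x : RingQuot (CoverRel cs)),
      S (x * RingQuot.mkAlgHom ℂ (CoverRel cs) (FreeAlgebra.ι ℂ t)) =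
        - RingQuot.mkAlgHom ℂ (CoverRel cs) (FreeAlgebra.ι ℂ t) * S (φ (t : W) x)) :
    ∀ l : List (Refl cs),
      S (RingQuot.mkAlgHom ℂ (CoverRel cs) (mono cs l)) =
        antiSign cs l • RingQuot.mkAlgHom ℂ (CoverRel cs) (mono cs (antiTuple l)) := by
  set π := RingQuot.mkAlgHom ℂ (CoverRel cs)
  have hφ_mono (t : Refl cs) (l : List (Refl cs)) :
      φ t (π (mono cs l)) = (-1 : ℂ) ^ l.length • π (mono cs (l.map (conjR · t))) :=
    map_mono_of_map_ι π (φ t : _ →ₐ[ℂ] _) (-1) (conjR · t) (fun s => by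
      simpa [t.2.odd_length.neg_one_pow, mk_mul_mul_inv_eq_conjR] using hφ t s s.2) l
  intro l
  induction hn : l.length generalizing l with
  | zero => simp [List.length_eq_zero_iff.mp hn, mono, antiTuple, antiSign, hS1]
  | succ n ih =>
    obtain ⟨l, t, rfl⟩ := l.eq_nil_or_concat'.resolve_left (by rintro rfl; simp at hn)
    rw [List.length_append, List.length_singleton, Nat.add_right_cancel_iff] at hn
    rw [mono_append_singleton, map_mul, hSrec, hφ_mono, map_smul,
      ih _ ((List.length_map _).trans hn), antiSign_map_conjR, antiTuple_map_conjR,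
      antiSign_append_singleton, antiTuple_append_singleton, mono_cons, map_mul,
      ← neg_one_smul ℂ (π (FreeAlgebra.ι ℂ t))]
    simp only [mul_smul_comm, smul_mul_assoc, smul_smul, pow_succ]
    module

/-- Let `𝒜̃` be the covering noncrossing algebra of a finite Coxeter
group `W`, a braided Hopf algebra in the Yetter–Drinfeld category over `ℂW` with
`Δ(α_t) = α_t ⊗ 1 + 1 ⊗ α_t`, `ε(α_t) = 0`, `S(α_t) = −α_t`, and
`S(xy) = S(y)S(|y|⁻¹·x)`.  Then the antipode is given on monomials by
`S(α_{t₁}⋯α_{t_k}) = ε(t₁,…,t_k) · α_{t_k} α_{t_{k−1}^{t_k}} ⋯ α_{t₁^{t₂⋯t_k}}`,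
where `ε(t₁,…,t_k) = (−1)^k ∏_{i=2}^k (−1)^{ℓ(t_i⋯t_k)}`. -/
theorem cover_antipode_formula (B : Type*) (W : Type*) [Group W] [Fintype W]
    (M : CoxeterMatrix B) (cs : CoxeterSystem M W)
    (φ : W →* (RingQuot (CoverRel cs) ≃ₐ[ℂ] RingQuot (CoverRel cs)))
    (hφ : ∀ (w t : W) (ht : cs.IsReflection t),
      φ w (RingQuot.mkAlgHom ℂ (CoverRel cs) (FreeAlgebra.ι ℂ (⟨t, ht⟩ : Refl cs)))
        = ((-1 : ℂ) ^ cs.length w) •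
            RingQuot.mkAlgHom ℂ (CoverRel cs)
              (FreeAlgebra.ι ℂ (⟨w * t * w⁻¹, ht.conj w⟩ : Refl cs)))
    (S : RingQuot (CoverRel cs) →ₗ[ℂ] RingQuot (CoverRel cs))
    (hS1 : S 1 = 1)
    (hSgen : ∀ t : Refl cs,
      S (RingQuot.mkAlgHom ℂ (CoverRel cs) (FreeAlgebra.ι ℂ t)) =
        - RingQuot.mkAlgHom ℂ (CoverRel cs) (FreeAlgebra.ι ℂ t))
    (hSrec : ∀ (t : Refl cs) (x : RingQuot (CoverRel cs)),
      S (x * RingQuot.mkAlgHom ℂ (CoverRel cs) (FreeAlgebra.ι ℂ t)) =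
        - RingQuot.mkAlgHom ℂ (CoverRel cs) (FreeAlgebra.ι ℂ t) * S (φ (t : W) x)) :
    ∀ l : List (Refl cs),
      S (RingQuot.mkAlgHom ℂ (CoverRel cs) (mono cs l)) =
        antiSign cs l • RingQuot.mkAlgHom ℂ (CoverRel cs) (mono cs (antiTuple l)) :=
  cover_antipode_formula_general B W M cs φ hφ S hS1 hSrec
end
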